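/- The infinite series ∑_{n=1}^∞ H_n² / (n²(n+1)) equals (17/4)ζ(4) − 3ζ(3). -/

import Mathlib

/-- Generalized harmonic number `H_n^{(r)} = ∑_{j=1}^n 1/j^r`. -/
noncomputable def H (n r : ℕ) : ℝ := ∑ j ∈ Finset.range n, (1 : ℝ) / (j + 1) ^ r

/-- Riemann zeta value `ζ(s) = ∑_{n=1}^∞ 1/n^s` (as a real series). -/
noncomputable def Z (s : ℕ) : ℝ := ∑' n : ℕ, (1 : ℝ) / (n + 1) ^ s

/-- Double zeta value `ζ(a,b) = ∑_{m>n≥1} 1/(m^a n^b)`. -/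
noncomputable def Z2 (a b : ℕ) : ℝ :=
  ∑' m : ℕ, (∑ j ∈ Finset.range m, (1 : ℝ) / (j + 1) ^ b) / (m + 1) ^ a

open Finset Real Filter Topology

lemma H_succ (n r : ℕ) : H (n+1) r = H n r + 1/((n:ℝ)+1)^r := by
  simp [H, Finset.sum_range_succ]

lemma H_zero (r : ℕ) : H 0 r = 0 := by simp [H]

lemma H_nonneg (n r : ℕ) : 0 ≤ H n r := by
  apply Finset.sum_nonneg; intro j _; positivity

lemma H_mono (r : ℕ) : Monotone (fun n => H n r) := by
  apply monotone_nat_of_le_succ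
  intro n
  have h : (0:ℝ) < 1/((n:ℝ)+1)^r := by positivity
  show H n r ≤ H (n+1) r
  rw [H_succ]; linarith

lemma H_le_cbrt (n : ℕ) : H n 1 ≤ 3 * (n:ℝ) ^ ((1:ℝ)/3) := by
  induction n with
  | zero => simp [H_zero]
  | succ n ih =>
    rw [H_succ, pow_one]
    have hc : ((n+1:ℕ):ℝ) = (n:ℝ)+1 := by push_cast; ring
    rw [hc]
    set a := ((n:ℝ)+1) ^ ((1:ℝ)/3) with hadef
    set b := (n:ℝ) ^ ((1:ℝ)/3) with hbdef
    have ha3 : a ^ (3:ℕ) = (n:ℝ)+1 := by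
      rw [hadef, ← Real.rpow_natCast (((n:ℝ)+1) ^ ((1:ℝ)/3)) 3, ← Real.rpow_mul (by positivity)]
      norm_num
    have hb3 : b ^ (3:ℕ) = (n:ℝ) := by
      rw [hbdef, ← Real.rpow_natCast ((n:ℝ) ^ ((1:ℝ)/3)) 3, ← Real.rpow_mul (by positivity)]
      norm_num
    have hb0 : 0 ≤ b := by positivity
    have hba : b ≤ a := by
      apply Real.rpow_le_rpow (by positivity) (by linarith [Nat.cast_nonneg (α := ℝ) n]) (by norm_num)
    have ha1 : 1 ≤ a := by
      nlinarith [sq_nonneg a, sq_nonneg (a-1), sq_nonneg (a+1)]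
    have key : 1/((n:ℝ)+1) ≤ 3*(a-b) := by
      rw [div_le_iff₀ (by positivity)]
      nlinarith [mul_nonneg hb0 hb0, mul_nonneg (mul_nonneg hb0 hb0) hb0,
        mul_nonneg hb0 (sub_nonneg.mpr hba), sq_nonneg (a-b), sq_nonneg (a+b),
        mul_nonneg (mul_nonneg hb0 hb0) (sub_nonneg.mpr hba)]
    linarith

-- H n 2 ≤ 2 - 1/n
lemma H2_le (n : ℕ) : H (n+1) 2 ≤ 2 - 1/((n:ℝ)+1) := by
  induction n with
  | zero => rw [H_succ, H_zero]; norm_num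
  | succ n ih =>
    rw [H_succ]
    have h1 : (0:ℝ) < (n:ℝ)+1 := by positivity
    have h2 : (0:ℝ) < (n:ℝ)+2 := by positivity
    have key : 1/(((n:ℝ)+1)+1)^2 ≤ 1/((n:ℝ)+1) - 1/((n:ℝ)+2) := by
      rw [div_sub_div _ _ (ne_of_gt h1) (ne_of_gt h2)]
      rw [div_le_div_iff₀ (by positivity) (by positivity)]
      ring_nf
      nlinarith
    have hc : ((n+1:ℕ):ℝ) = (n:ℝ)+1 := by push_cast; ring
    have hc2 : (n:ℝ)+1+1 = (n:ℝ)+2 := by ring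
    rw [hc, hc2]
    rw [hc2] at key
    linarith

lemma H2_le' (n : ℕ) : H n 2 ≤ 2 := by
  cases n with
  | zero => simp [H_zero]
  | succ n =>
    have := H2_le n
    have : (0:ℝ) < 1/((n:ℝ)+1) := by positivity
    linarith [H2_le n]

lemma H_one : H 1 1 = 1 := by simp [H]

lemma H_eq_sum (n : ℕ) : H n 1 = ∑ j ∈ Finset.range n, (1:ℝ)/((j:ℝ)+1) := by
  simp [H]

lemma F1 (m : ℕ) :
    ∑ u ∈ range m, (1:ℝ)/(((m:ℝ)-(u:ℝ))*((u:ℝ)+1)) = 2 * H m 1 / ((m:ℝ)+1) := by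
  have refl : ∑ u ∈ range m, (1:ℝ)/((m:ℝ)-(u:ℝ)) = H m 1 := by
    rw [H_eq_sum, ← Finset.sum_range_reflect (fun u => (1:ℝ)/((m:ℝ)-(u:ℝ))) m]
    apply Finset.sum_congr rfl
    intro j hj
    rw [Finset.mem_range] at hj
    have hcast : ((m - 1 - j : ℕ):ℝ) = (m:ℝ) - 1 - (j:ℝ) := by
      rw [show m-1-j = m-(1+j) by omega, Nat.cast_sub (by omega)]
      push_cast; ring
    rw [hcast]
    congr 1; ring
  have key : ∀ u ∈ range m, (1:ℝ)/(((m:ℝ)-(u:ℝ))*((u:ℝ)+1))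
      = (1/((m:ℝ)+1)) * (1/((m:ℝ)-(u:ℝ)) + 1/((u:ℝ)+1)) := by
    intro u hu
    rw [Finset.mem_range] at hu
    have h1 : (u:ℝ)+1 ≤ (m:ℝ) := by exact_mod_cast Nat.succ_le_of_lt hu
    have h2 : (0:ℝ) < (m:ℝ)-(u:ℝ) := by linarith
    have h3 : (0:ℝ) < (u:ℝ)+1 := by positivity
    field_simp
    ring
  rw [Finset.sum_congr rfl key, ← Finset.mul_sum, Finset.sum_add_distrib, refl, ← H_eq_sum]
  ring

lemma F2 (m : ℕ) : ∑ t ∈ range m, H t 1/((t:ℝ)+1) = (H m 1^2 - H m 2)/2 := by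
  induction m with
  | zero => simp [H_zero]
  | succ m ih =>
    rw [Finset.sum_range_succ, ih, H_succ m 1, H_succ m 2, pow_one]
    have h : ((m:ℝ)+1) ≠ 0 := by positivity
    field_simp
    ring

lemma F3 (m : ℕ) : ∑ u ∈ range m, H (m - 1 - u) 1/((u:ℝ)+1) = H m 1^2 - H m 2 := by
  induction m with
  | zero => simp [H_zero]
  | succ m ih =>
    rw [Finset.sum_range_succ]
    have last : H (m + 1 - 1 - m) 1 = 0 := by
      rw [show m+1-1-m = 0 by omega, H_zero]
    rw [last]
    have step : ∀ u ∈ range m, H (m+1-1-u) 1/((u:ℝ)+1)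
        = H (m-1-u) 1/((u:ℝ)+1) + 1/(((m:ℝ)-(u:ℝ))*((u:ℝ)+1)) := by
      intro u hu
      rw [Finset.mem_range] at hu
      have e1 : m+1-1-u = (m-1-u)+1 := by omega
      rw [e1, H_succ, pow_one]
      have e2 : ((m-1-u : ℕ):ℝ) = (m:ℝ)-1-(u:ℝ) := by
        rw [show m-1-u = m-(1+u) by omega, Nat.cast_sub (by omega)]
        push_cast; ring
      rw [e2]
      have h1 : (u:ℝ)+1 ≤ (m:ℝ) := by exact_mod_cast Nat.succ_le_of_lt hu
      have h2 : (0:ℝ) < (m:ℝ)-(u:ℝ) := by linarith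
      have h3 : (0:ℝ) < (u:ℝ)+1 := by positivity
      have e3 : (m:ℝ)-1-(u:ℝ)+1 = (m:ℝ)-(u:ℝ) := by ring
      rw [e3, add_div, div_div]
    rw [Finset.sum_congr rfl step, Finset.sum_add_distrib, ih, F1,
      H_succ m 1, H_succ m 2, pow_one]
    have h : ((m:ℝ)+1) ≠ 0 := by positivity
    field_simp
    ring

lemma F4 (s : ℕ) : ∑ i ∈ range (s+1), 2 * H (i+1) 1 / (((i:ℝ)+2)*((s:ℝ)-(i:ℝ)+1))
    = 3*(H (s+2) 1^2 - H (s+2) 2)/((s:ℝ)+3) := by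
  have split : ∀ i ∈ range (s+1), 2 * H (i+1) 1 / (((i:ℝ)+2)*((s:ℝ)-(i:ℝ)+1))
      = (2/((s:ℝ)+3)) * (H (i+1) 1/((i:ℝ)+2) + H (i+1) 1/((s:ℝ)-(i:ℝ)+1)) := by
    intro i hi
    rw [Finset.mem_range] at hi
    have h1 : (i:ℝ) ≤ (s:ℝ) := by exact_mod_cast Nat.lt_succ_iff.mp hi
    have h2 : (0:ℝ) < (s:ℝ)-(i:ℝ)+1 := by linarith
    have h3 : (0:ℝ) < (i:ℝ)+2 := by positivity
    have h4 : (0:ℝ) < (s:ℝ)+3 := by positivity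
    field_simp
    ring
  have sumA : ∑ i ∈ range (s+1), H (i+1) 1/((i:ℝ)+2) = (H (s+2) 1^2 - H (s+2) 2)/2 := by
    have := F2 (s+2)
    rw [Finset.sum_range_succ' (fun t => H t 1/((t:ℝ)+1)) (s+1)] at this
    simp only [H_zero] at this
    rw [← this]
    have : ∀ i ∈ range (s+1), H (i+1) 1/((i:ℝ)+2) = H (i+1) 1/(((i+1:ℕ):ℝ)+1) := by
      intro i _; congr 1; push_cast; ring
    rw [Finset.sum_congr rfl this]
    simp
  have sumB : ∑ i ∈ range (s+1), H (i+1) 1/((s:ℝ)-(i:ℝ)+1) = H (s+2) 1^2 - H (s+2) 2 := by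
    rw [← Finset.sum_range_reflect (fun i => H (i+1) 1/((s:ℝ)-(i:ℝ)+1)) (s+1)]
    have F3' := F3 (s+2)
    rw [Finset.sum_range_succ] at F3'
    rw [show s+2-1-(s+1) = 0 by omega, H_zero] at F3'
    simp only [zero_div, add_zero] at F3'
    rw [← F3']
    apply Finset.sum_congr rfl
    intro j hj
    rw [Finset.mem_range] at hj
    have hj' : j ≤ s := Nat.lt_succ_iff.mp hj
    have e1 : s+1-1-j = s-j := by omega
    have e2 : (s-j)+1 = s+2-1-j := by omega
    have e3 : ((s-j:ℕ):ℝ) = (s:ℝ)-(j:ℝ) := by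
      rw [Nat.cast_sub hj']
    rw [e1, e2, e3]
    congr 1
    ring
  rw [Finset.sum_congr rfl split, ← Finset.mul_sum, Finset.sum_add_distrib, sumA, sumB]
  ring

lemma sum_shift (c N : ℕ) : ∑ i ∈ range N, (1:ℝ)/((i:ℝ)+(c:ℝ)+1) = H (N+c) 1 - H c 1 := by
  induction N with
  | zero => simp
  | succ N ih =>
    rw [Finset.sum_range_succ, ih, show N+1+c = (N+c)+1 by omega, H_succ, pow_one]
    push_cast
    ring

lemma H_tail_le (N c : ℕ) : H (N + c) 1 - H N 1 ≤ (c:ℝ)/((N:ℝ)+1) := by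
  induction c with
  | zero => simp
  | succ c ih =>
    rw [show N+(c+1) = (N+c)+1 by omega, H_succ, pow_one]
    have h1 : (N:ℝ)+1 ≤ ((N+c:ℕ):ℝ)+1 := by push_cast; linarith [Nat.cast_nonneg (α := ℝ) c]
    have h2 : 1/(((N+c:ℕ):ℝ)+1) ≤ 1/((N:ℝ)+1) := by
      apply one_div_le_one_div_of_le (by positivity) h1
    have h3 : ((c:ℝ)+1)/((N:ℝ)+1) = (c:ℝ)/((N:ℝ)+1) + 1/((N:ℝ)+1) := by ring
    push_cast
    push_cast at ih h2
    rw [h3]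
    linarith

lemma tendsto_H_diff (c : ℕ) : Tendsto (fun N => H (N+c) 1 - H N 1) atTop (𝓝 0) := by
  apply squeeze_zero
  · intro N
    have := H_mono 1 (show N ≤ N + c by omega)
    simpa using this
  · intro N; exact H_tail_le N c
  · have h := tendsto_one_div_add_atTop_nhds_zero_nat.const_mul (c:ℝ)
    rw [mul_zero] at h
    convert h using 2 with N
    ring

lemma summable_pow_k {k : ℕ} (hk : 2 ≤ k) : Summable (fun n:ℕ => 1/((n:ℝ)+1)^k) := by
  have := (summable_nat_add_iff 1).mpr (summable_one_div_nat_pow.mpr hk)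
  apply this.congr
  intro n
  push_cast
  ring

lemma tail_summable (m : ℕ) :
    Summable (fun i:ℕ => (1:ℝ)/(((i:ℝ)+1)*((i:ℝ)+(m:ℝ)+2))) := by
  apply Summable.of_nonneg_of_le (fun i => by positivity) _ (summable_pow_k (le_refl 2))
  intro i
  rw [pow_two]
  apply one_div_le_one_div_of_le (by positivity)
  have : (0:ℝ) ≤ (m:ℝ) := Nat.cast_nonneg m
  nlinarith [Nat.cast_nonneg (α := ℝ) i]

lemma tail_tsum (m : ℕ) :
    ∑' i:ℕ, (1:ℝ)/(((i:ℝ)+1)*((i:ℝ)+(m:ℝ)+2)) = H (m+1) 1/((m:ℝ)+1) := by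
  set f := fun i:ℕ => (1:ℝ)/(((i:ℝ)+1)*((i:ℝ)+(m:ℝ)+2)) with hf
  have hsum := tail_summable m
  have hpartial : ∀ N, ∑ i ∈ range N, f i
      = (H (m+1) 1 - (H (N+(m+1)) 1 - H N 1))/((m:ℝ)+1) := by
    intro N
    have key : ∀ i ∈ range N, f i
        = (1/((m:ℝ)+1)) * (1/((i:ℝ)+1) - 1/((i:ℝ)+((m+1:ℕ):ℝ)+1)) := by
      intro i _
      rw [hf]
      have h1 : (0:ℝ) < (i:ℝ)+1 := by positivity
      have h2 : (0:ℝ) < (i:ℝ)+(m:ℝ)+2 := by positivity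
      push_cast
      field_simp
      ring_nf
    rw [Finset.sum_congr rfl key, ← Finset.mul_sum]
    rw [Finset.sum_sub_distrib, sum_shift (m+1) N, ← H_eq_sum]
    field_simp
    ring
  have htend : Tendsto (fun N => ∑ i ∈ range N, f i) atTop
      (𝓝 (H (m+1) 1/((m:ℝ)+1))) := by
    simp only [hpartial]
    have h0 := tendsto_H_diff (m+1)
    have : Tendsto (fun N => (H (m+1) 1 - (H (N+(m+1)) 1 - H N 1))/((m:ℝ)+1)) atTop
        (𝓝 ((H (m+1) 1 - 0)/((m:ℝ)+1))) := by
      apply Tendsto.div_const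
      exact tendsto_const_nhds.sub h0
    simpa using this
  exact tendsto_nhds_unique hsum.hasSum.tendsto_sum_nat htend

def diagEquiv : (Σ s:ℕ, Fin (s+1)) ≃ ℕ×ℕ where
  toFun x := (x.2.1, x.1 - x.2.1)
  invFun p := ⟨p.1 + p.2, ⟨p.1, by omega⟩⟩
  left_inv := by
    rintro ⟨s, ⟨i, hi⟩⟩
    have h2 : i + (s - i) = s := by omega
    refine Sigma.ext (by simpa using h2) ?_
    exact (Fin.heq_ext_iff (by simpa using h2)).mpr rfl
  right_inv := by
    rintro ⟨a, b⟩
    simp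

lemma tsum_diag {f : ℕ×ℕ → ℝ} (hf : Summable f) :
    ∑' p : ℕ×ℕ, f p = ∑' s:ℕ, ∑ i ∈ range (s+1), f (i, s-i) := by
  rw [← diagEquiv.tsum_eq f]
  have hs : Summable (fun c : (Σ s:ℕ, Fin (s+1)) => f (diagEquiv c)) :=
    (diagEquiv.summable_iff (f := f)).mpr hf
  rw [Summable.tsum_sigma' (fun s => (hasSum_fintype _).summable) hs]
  congr 1
  funext s
  rw [tsum_fintype]
  exact Fin.sum_univ_eq_sum_range (fun i => f (i, s-i)) (s+1)

lemma Z2_val : Z 2 = π^2/6 := by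
  rw [← hasSum_zeta_two.tsum_eq, Summable.tsum_eq_zero_add hasSum_zeta_two.summable]
  have : ∑' (b:ℕ), (1:ℝ)/((b:ℝ)+1)^2 = ∑' (b:ℕ), (1:ℝ)/((b+1:ℕ):ℝ)^2 := by
    apply tsum_congr; intro n; push_cast; ring_nf
  simp only [Z]
  rw [this]
  norm_num

lemma Z4_val : Z 4 = π^4/90 := by
  rw [← hasSum_zeta_four.tsum_eq, Summable.tsum_eq_zero_add hasSum_zeta_four.summable]
  have : ∑' (b:ℕ), (1:ℝ)/((b:ℝ)+1)^4 = ∑' (b:ℕ), (1:ℝ)/((b+1:ℕ):ℝ)^4 := by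
    apply tsum_congr; intro n; push_cast; ring_nf
  simp only [Z]
  rw [this]
  norm_num

lemma summable_c_rpow {p : ℝ} (hp : 1 < p) : Summable (fun n:ℕ => 1/((n:ℝ)+1)^p) := by
  have := (summable_nat_add_iff 1).mpr (summable_one_div_nat_rpow.mpr hp)
  apply this.congr
  intro n
  push_cast
  ring_nf

lemma H_le_cbrt' (n : ℕ) : H (n+1) 1 ≤ 3 * ((n:ℝ)+1) ^ ((1:ℝ)/3) := by
  have := H_le_cbrt (n+1); push_cast at this; exact this

lemma H_le_cbrt'' (n : ℕ) : H (n+2) 1 ≤ 3 * ((n:ℝ)+2) ^ ((1:ℝ)/3) := by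
  have := H_le_cbrt (n+2); push_cast at this; exact this

lemma rpow_sub_pow (x : ℝ) (hx : 0 < x) (a : ℝ) (k : ℕ) :
    x ^ a / x ^ k = x ^ (a - k) := by
  rw [← Real.rpow_natCast x k, ← Real.rpow_sub hx]

lemma S_A : Summable (fun n:ℕ => H (n+1) 1/((n:ℝ)+1)^2) := by
  apply Summable.of_nonneg_of_le
    (fun n => by have := H_nonneg (n+1) 1; positivity)
    _ ((summable_c_rpow (by norm_num : (1:ℝ) < 5/3)).mul_left 3)
  intro n
  have hx : (0:ℝ) < (n:ℝ)+1 := by positivity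
  calc H (n+1) 1/((n:ℝ)+1)^2 ≤ (3*((n:ℝ)+1)^((1:ℝ)/3))/((n:ℝ)+1)^2 := by
        apply div_le_div_of_nonneg_right ?_ (by positivity)
        · exact H_le_cbrt' n
    _ = 3 * (((n:ℝ)+1)^((1:ℝ)/3)/((n:ℝ)+1)^(2:ℕ)) := by norm_num; ring
    _ = 3 * ((n:ℝ)+1)^((1:ℝ)/3 - (2:ℕ)) := by rw [rpow_sub_pow _ hx]
    _ = 3 * (1/((n:ℝ)+1)^((5:ℝ)/3)) := by
        rw [show (1:ℝ)/3 - ((2:ℕ):ℝ) = -(5/3) by push_cast; norm_num,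
          Real.rpow_neg (le_of_lt hx)]
        rw [inv_eq_one_div]

lemma S_A3 : Summable (fun n:ℕ => H (n+1) 1/((n:ℝ)+1)^3) := by
  apply Summable.of_nonneg_of_le
    (fun n => by have := H_nonneg (n+1) 1; positivity) _ S_A
  intro n
  have hx : (0:ℝ) < (n:ℝ)+1 := by positivity
  rw [div_eq_mul_inv, div_eq_mul_inv]
  apply mul_le_mul_of_nonneg_left _ (H_nonneg (n+1) 1)
  apply inv_anti₀ (by positivity)
  apply pow_le_pow_right₀ (by linarith) (by norm_num)

lemma S_B : Summable (fun n:ℕ => H (n+1) 1^2/((n:ℝ)+1)^2) := by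
  apply Summable.of_nonneg_of_le
    (fun n => by have := H_nonneg (n+1) 1; positivity)
    _ ((summable_c_rpow (by norm_num : (1:ℝ) < 4/3)).mul_left 9)
  intro n
  have hx : (0:ℝ) < (n:ℝ)+1 := by positivity
  have hsq : H (n+1) 1^2 ≤ 9 * ((n:ℝ)+1)^((2:ℝ)/3) := by
    have h := H_le_cbrt' n
    have h2 : H (n+1) 1^2 ≤ (3*((n:ℝ)+1)^((1:ℝ)/3))^2 :=
      pow_le_pow_left₀ (H_nonneg (n+1) 1) h 2
    calc H (n+1) 1^2 ≤ (3*((n:ℝ)+1)^((1:ℝ)/3))^2 := h2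
      _ = 9 * (((n:ℝ)+1)^((1:ℝ)/3))^(2:ℕ) := by ring
      _ = 9 * ((n:ℝ)+1)^((2:ℝ)/3) := by
          rw [← Real.rpow_natCast (((n:ℝ)+1)^((1:ℝ)/3)) 2, ← Real.rpow_mul (le_of_lt hx)]
          norm_num
  calc H (n+1) 1^2/((n:ℝ)+1)^2 ≤ (9*((n:ℝ)+1)^((2:ℝ)/3))/((n:ℝ)+1)^2 := by
        apply div_le_div_of_nonneg_right hsq (by positivity)
    _ = 9 * (((n:ℝ)+1)^((2:ℝ)/3)/((n:ℝ)+1)^(2:ℕ)) := by norm_num; ring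
    _ = 9 * ((n:ℝ)+1)^((2:ℝ)/3 - (2:ℕ)) := by rw [rpow_sub_pow _ hx]
    _ = 9 * (1/((n:ℝ)+1)^((4:ℝ)/3)) := by
        rw [show (2:ℝ)/3 - ((2:ℕ):ℝ) = -(4/3) by push_cast; norm_num,
          Real.rpow_neg (le_of_lt hx)]
        rw [inv_eq_one_div]

lemma S_W : Summable (fun n:ℕ => H n 1^2/((n:ℝ)+1)^2) := by
  apply Summable.of_nonneg_of_le (fun n => by have := H_nonneg n 1; positivity) _ S_B
  intro n
  apply div_le_div_of_nonneg_right _ (by positivity)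
  apply pow_le_pow_left₀ (H_nonneg n 1) (H_mono 1 (Nat.le_succ n))

lemma S_V : Summable (fun n:ℕ => H n 2/((n:ℝ)+1)^2) := by
  apply Summable.of_nonneg_of_le (fun n => by have := H_nonneg n 2; positivity)
    _ ((summable_pow_k (le_refl 2)).mul_left 2)
  intro n
  have hx : (0:ℝ) < ((n:ℝ)+1)^2 := by positivity
  rw [div_eq_mul_inv, mul_one_div, div_eq_mul_inv]
  exact mul_le_mul_of_nonneg_right (H2_le' n) (by positivity)

lemma S_P : Summable (fun n:ℕ => H (n+1) 2/((n:ℝ)+1)^2) := by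
  apply Summable.of_nonneg_of_le (fun n => by have := H_nonneg (n+1) 2; positivity)
    _ ((summable_pow_k (le_refl 2)).mul_left 2)
  intro n
  rw [div_eq_mul_inv, mul_one_div, div_eq_mul_inv]
  exact mul_le_mul_of_nonneg_right (H2_le' (n+1)) (by positivity)

lemma S_G : Summable (fun t:ℕ => 2*H (t+1) 1*H (t+2) 1/((t:ℝ)+2)^2) := by
  apply Summable.of_nonneg_of_le
    (fun t => by have := H_nonneg (t+1) 1; have := H_nonneg (t+2) 1; positivity)
    _ ((summable_c_rpow (by norm_num : (1:ℝ) < 4/3)).mul_left 18)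
  intro t
  have hx : (0:ℝ) < (t:ℝ)+2 := by positivity
  have hx1 : (0:ℝ) < (t:ℝ)+1 := by positivity
  have h1 : H (t+1) 1 ≤ 3*((t:ℝ)+2)^((1:ℝ)/3) := by
    calc H (t+1) 1 ≤ H (t+2) 1 := H_mono 1 (Nat.le_succ (t+1))
      _ ≤ 3*((t:ℝ)+2)^((1:ℝ)/3) := H_le_cbrt'' t
  have h2 := H_le_cbrt'' t
  have hnum : 2*H (t+1) 1*H (t+2) 1 ≤ 18 * ((t:ℝ)+2)^((2:ℝ)/3) := by
    have := mul_le_mul h1 h2 (H_nonneg (t+2) 1) (by positivity)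
    calc 2*H (t+1) 1*H (t+2) 1 = 2*(H (t+1) 1*H (t+2) 1) := by ring
      _ ≤ 2*((3*((t:ℝ)+2)^((1:ℝ)/3))*(3*((t:ℝ)+2)^((1:ℝ)/3))) := by linarith
      _ = 18 * (((t:ℝ)+2)^((1:ℝ)/3))^(2:ℕ) := by ring
      _ = 18 * ((t:ℝ)+2)^((2:ℝ)/3) := by
          rw [← Real.rpow_natCast (((t:ℝ)+2)^((1:ℝ)/3)) 2, ← Real.rpow_mul (le_of_lt hx)]
          norm_num
  calc 2*H (t+1) 1*H (t+2) 1/((t:ℝ)+2)^2 ≤ (18*((t:ℝ)+2)^((2:ℝ)/3))/((t:ℝ)+2)^2 := by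
        apply div_le_div_of_nonneg_right hnum (by positivity)
    _ = 18 * (((t:ℝ)+2)^((2:ℝ)/3)/((t:ℝ)+2)^(2:ℕ)) := by norm_num; ring
    _ = 18 * ((t:ℝ)+2)^((2:ℝ)/3 - (2:ℕ)) := by rw [rpow_sub_pow _ hx]
    _ ≤ 18 * (1/((t:ℝ)+1)^((4:ℝ)/3)) := by
        rw [show (2:ℝ)/3 - ((2:ℕ):ℝ) = -(4/3) by push_cast; norm_num,
          Real.rpow_neg (le_of_lt hx), inv_eq_one_div]
        apply mul_le_mul_of_nonneg_left _ (by norm_num)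
        apply div_le_div_of_nonneg_left one_pos.le (by positivity)
        · exact Real.rpow_le_rpow (le_of_lt hx1) (by linarith) (by norm_num)

noncomputable def EA : ℝ := ∑' n:ℕ, H (n+1) 1/((n:ℝ)+1)^2
noncomputable def EA3 : ℝ := ∑' n:ℕ, H (n+1) 1/((n:ℝ)+1)^3
noncomputable def EB : ℝ := ∑' n:ℕ, H (n+1) 1^2/((n:ℝ)+1)^2
noncomputable def EW : ℝ := ∑' n:ℕ, H n 1^2/((n:ℝ)+1)^2
noncomputable def EV : ℝ := ∑' n:ℕ, H n 2/((n:ℝ)+1)^2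
noncomputable def EP : ℝ := ∑' n:ℕ, H (n+1) 2/((n:ℝ)+1)^2

lemma tsum_shift {g : ℕ → ℝ} (hg : Summable g) (f : ℕ → ℝ) (hfg : ∀ n, f n = g (n+1)) :
    ∑' n, f n = (∑' n, g n) - g 0 := by
  rw [tsum_congr hfg, Summable.tsum_eq_zero_add hg]
  ring

lemma summable_shift {g : ℕ → ℝ} (hg : Summable g) (f : ℕ → ℝ) (hfg : ∀ n, f n = g (n+1)) :
    Summable f := by
  have := (summable_nat_add_iff 1).mpr hg
  exact this.congr (fun n => (hfg n).symm)

lemma tail2 (m : ℕ) : ∑' d:ℕ, (1:ℝ)/(((d:ℝ)+(m:ℝ)+2)^2) = Z 2 - H (m+1) 2 := by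
  have h := Summable.sum_add_tsum_nat_add (f := fun n:ℕ => 1/((n:ℝ)+1)^2) (m+1) (summable_pow_k (le_refl 2))
  have h1 : ∑ i ∈ range (m+1), (1:ℝ)/((i:ℝ)+1)^2 = H (m+1) 2 := by
    simp [H]
  have h2 : ∑' d:ℕ, (1:ℝ)/(((d+(m+1):ℕ):ℝ)+1)^2 = ∑' d:ℕ, (1:ℝ)/(((d:ℝ)+(m:ℝ)+2)^2) := by
    apply tsum_congr
    intro d
    push_cast
    ring_nf
  rw [h1, h2] at h
  show _ = Z 2 - _
  rw [Z]
  linarith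

lemma tail2_nonneg (m : ℕ) : 0 ≤ Z 2 - H (m+1) 2 := by
  rw [← tail2 m]
  exact tsum_nonneg (fun d => by positivity)

noncomputable def fV : ℕ×ℕ → ℝ := fun p => 1/(((p.1:ℝ)+1)^2*((p.1:ℝ)+(p.2:ℝ)+2)^2)

lemma fV_nonneg : ∀ p, 0 ≤ fV p := fun p => by unfold fV; positivity

lemma rowV (j : ℕ) : ∑' d:ℕ, fV (j,d) = (1/((j:ℝ)+1)^2) * (Z 2 - H (j+1) 2) := by
  have key : ∀ d:ℕ, fV (j,d) = (1/((j:ℝ)+1)^2) * (1/(((d:ℝ)+(j:ℝ)+2)^2)) := by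
    intro d; unfold fV; simp only; field_simp; ring
  rw [tsum_congr key, tsum_mul_left, tail2 j]

lemma rowV_summable (j : ℕ) : Summable (fun d => fV (j,d)) := by
  apply Summable.of_nonneg_of_le (fun d => fV_nonneg _) _ (summable_pow_k (le_refl 2))
  intro d
  unfold fV
  simp only
  apply one_div_le_one_div_of_le (by positivity)
  have h1 : ((d:ℝ)+1)^2 ≤ ((j:ℝ)+(d:ℝ)+2)^2 := by
    apply pow_le_pow_left₀ (by positivity)
    linarith [Nat.cast_nonneg (α := ℝ) j]
  have h2 : (1:ℝ) ≤ ((j:ℝ)+1)^2 := by nlinarith [Nat.cast_nonneg (α := ℝ) j]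
  nlinarith [sq_nonneg ((j:ℝ)+(d:ℝ)+2)]

lemma Z2_nonneg : 0 ≤ Z 2 := tsum_nonneg (fun n => by positivity)

lemma summable_fV : Summable fV := by
  apply (summable_prod_of_nonneg fV_nonneg).mpr
  constructor
  · exact rowV_summable
  · apply Summable.of_nonneg_of_le
      (fun j => tsum_nonneg (fun d => fV_nonneg _))
      _ ((summable_pow_k (le_refl 2)).mul_left (Z 2))
    intro j
    rw [rowV j, mul_comm, mul_one_div, mul_one_div]
    apply div_le_div_of_nonneg_right _ (by positivity)
    · linarith [H_nonneg (j+1) 2]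

lemma VV1 : ∑' p : ℕ×ℕ, fV p = Z 2 * Z 2 - EP := by
  rw [Summable.tsum_prod' summable_fV rowV_summable]
  have key : ∀ j:ℕ, ∑' d:ℕ, fV (j,d) = Z 2 * (1/((j:ℝ)+1)^2) - H (j+1) 2/((j:ℝ)+1)^2 := by
    intro j; rw [rowV j]; ring
  rw [tsum_congr key, Summable.tsum_sub ((summable_pow_k (le_refl 2)).mul_left (Z 2)) S_P,
    tsum_mul_left]
  rw [EP, Z]

lemma VV2 : ∑' p : ℕ×ℕ, fV p = EV := by
  rw [tsum_diag summable_fV]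
  have inner : ∀ s:ℕ, ∑ i ∈ range (s+1), fV (i, s-i) = H (s+1) 2/((s:ℝ)+2)^2 := by
    intro s
    have key : ∀ i ∈ range (s+1), fV (i, s-i) = (1/((i:ℝ)+1)^2)/(((s:ℝ)+2)^2) := by
      intro i hi
      rw [Finset.mem_range] at hi
      unfold fV
      simp only
      rw [Nat.cast_sub (Nat.lt_succ_iff.mp hi)]
      rw [div_div]
      ring_nf
    rw [Finset.sum_congr rfl key, ← Finset.sum_div]
    congr 1
  rw [tsum_congr inner]
  rw [tsum_shift S_V _ (fun s => by
    show H (s+1) 2/((s:ℝ)+2)^2 = H (s+1) 2/(((s+1:ℕ):ℝ)+1)^2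
    push_cast; ring_nf)]
  rw [H_zero]
  simp [EV]

lemma EP_rel : EP = EV + Z 4 := by
  rw [EP, EV, Z]
  rw [← Summable.tsum_add S_V (summable_pow_k (by norm_num : 2 ≤ 4))]
  apply tsum_congr
  intro n
  rw [H_succ]
  have hx : ((n:ℝ)+1) ≠ 0 := by positivity
  field_simp

lemma EV_val : EV = (Z 2^2 - Z 4)/2 := by
  have h1 := VV1
  have h2 := VV2
  have h3 := EP_rel
  have : EV = Z 2 * Z 2 - (EV + Z 4) := by rw [← h3, ← h1, h2]
  nlinarith [this]

lemma EP_val : EP = (Z 2^2 + Z 4)/2 := by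
  rw [EP_rel, EV_val]; ring

lemma tail2_summable (m : ℕ) : Summable (fun d:ℕ => (1:ℝ)/(((d:ℝ)+(m:ℝ)+2)^2)) := by
  have := (summable_nat_add_iff (m+1)).mpr (summable_pow_k (le_refl 2))
  apply this.congr
  intro n
  push_cast
  ring_nf

noncomputable def fY : ℕ×ℕ → ℝ :=
  fun p => 1/(((p.1:ℝ)+1)*((p.2:ℝ)+1)*((p.1:ℝ)+(p.2:ℝ)+2))

lemma fY_nonneg : ∀ p, 0 ≤ fY p := fun p => by unfold fY; positivity

lemma rowY (m : ℕ) : ∑' n:ℕ, fY (m,n) = H (m+1) 1/((m:ℝ)+1)^2 := by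
  have key : ∀ n:ℕ, fY (m,n)
      = (1/((m:ℝ)+1)) * (1/(((n:ℝ)+1)*((n:ℝ)+(m:ℝ)+2))) := by
    intro n; unfold fY; simp only; field_simp; ring
  rw [tsum_congr key, tsum_mul_left, tail_tsum m, div_mul_div_comm, one_mul, ← pow_two]

lemma rowY_summable (m : ℕ) : Summable (fun n => fY (m,n)) := by
  have key : ∀ n:ℕ, fY (m,n)
      = (1/((m:ℝ)+1)) * (1/(((n:ℝ)+1)*((n:ℝ)+(m:ℝ)+2))) := by
    intro n; unfold fY; simp only; field_simp; ring
  exact ((tail_summable m).mul_left _).congr (fun n => (key n).symm)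

lemma summable_fY : Summable fY := by
  apply (summable_prod_of_nonneg fY_nonneg).mpr
  refine ⟨rowY_summable, ?_⟩
  apply S_A.congr
  intro m
  rw [rowY m]

lemma YY1 : ∑' p : ℕ×ℕ, fY p = EA := by
  rw [Summable.tsum_prod' summable_fY rowY_summable, tsum_congr rowY, EA]

lemma innerY (s : ℕ) : ∑ i ∈ range (s+1), fY (i, s-i) = 2*H (s+1) 1/((s:ℝ)+2)^2 := by
  have key : ∀ i ∈ range (s+1), fY (i, s-i)
      = (1/((s:ℝ)+2)) * (1/(((((s+1:ℕ)):ℝ)-(i:ℝ))*((i:ℝ)+1))) := by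
    intro i hi
    rw [Finset.mem_range] at hi
    unfold fY
    simp only
    rw [Nat.cast_sub (Nat.lt_succ_iff.mp hi)]
    push_cast
    rw [show (i:ℝ) + ((s:ℝ)-(i:ℝ)) + 2 = (s:ℝ)+2 from by ring,
      one_div_mul_one_div]
    congr 1
    ring
  rw [Finset.sum_congr rfl key, ← Finset.mul_sum, F1 (s+1)]
  have h4 : ((s:ℝ)+2) ≠ 0 := by positivity
  push_cast
  rw [show (s:ℝ)+1+1 = (s:ℝ)+2 from by ring]
  rw [one_div_mul_eq_div, div_div, ← pow_two]

lemma YY2 : ∑' p : ℕ×ℕ, fY p = 2*(EA - Z 3) := by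
  rw [tsum_diag summable_fY, tsum_congr innerY]
  have key : ∀ s:ℕ, 2*H (s+1) 1/((s:ℝ)+2)^2
      = 2*(H (s+2) 1/((s:ℝ)+2)^2) - 2*(1/((s:ℝ)+2)^3) := by
    intro s
    rw [show H (s+2) 1 = H (s+1) 1 + 1/((s:ℝ)+2) by
      rw [H_succ (s+1) 1, pow_one]; push_cast; ring_nf]
    have h4 : ((s:ℝ)+2) ≠ 0 := by positivity
    field_simp
    ring
  rw [tsum_congr key]
  have hg1 : Summable (fun s:ℕ => H (s+2) 1/((s:ℝ)+2)^2) :=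
    summable_shift S_A _ (fun s => by push_cast; ring_nf)
  have hg2 : Summable (fun s:ℕ => (1:ℝ)/((s:ℝ)+2)^3) :=
    summable_shift (summable_pow_k (by norm_num : 2 ≤ 3)) _ (fun s => by push_cast; ring_nf)
  have e1 : ∑' s:ℕ, H (s+2) 1/((s:ℝ)+2)^2 = EA - 1 := by
    rw [tsum_shift S_A (fun s => H (s+2) 1/((s:ℝ)+2)^2) (fun s => by push_cast; ring_nf)]
    show (∑' n:ℕ, H (n+1) 1/((n:ℝ)+1)^2) - H (0+1) 1/(((0:ℕ):ℝ)+1)^2 = EA - 1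
    rw [show H (0+1) 1 = 1 from H_one]
    rw [show (∑' n:ℕ, H (n+1) 1/((n:ℝ)+1)^2) = EA from rfl]
    norm_num
  have e2 : ∑' s:ℕ, (1:ℝ)/((s:ℝ)+2)^3 = Z 3 - 1 := by
    rw [tsum_shift (summable_pow_k (by norm_num : 2 ≤ 3)) (fun s => (1:ℝ)/((s:ℝ)+2)^3)
      (fun s => by push_cast; ring_nf)]
    rw [show (∑' n:ℕ, (1:ℝ)/((n:ℝ)+1)^3) = Z 3 from rfl]
    norm_num
  rw [Summable.tsum_sub (hg1.mul_left 2) (hg2.mul_left 2), tsum_mul_left, tsum_mul_left, e1, e2]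
  ring

lemma EA_val : EA = 2*Z 3 := by
  have h := YY1.symm.trans YY2
  linarith

noncomputable def fX : ℕ×ℕ → ℝ :=
  fun p => 1/(((p.1:ℝ)+1)*((p.2:ℝ)+1)*((p.1:ℝ)+(p.2:ℝ)+2)^2)

lemma fX_nonneg : ∀ p, 0 ≤ fX p := fun p => by unfold fX; positivity

lemma fX_split (m n : ℕ) : fX (m,n)
    = (1/((m:ℝ)+1)^2) * (1/(((n:ℝ)+1)*((n:ℝ)+(m:ℝ)+2)) - 1/(((n:ℝ)+(m:ℝ)+2)^2)) := by
  unfold fX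
  simp only
  have h1 : ((n:ℝ)+1) ≠ 0 := by positivity
  have h2 : ((n:ℝ)+(m:ℝ)+2) ≠ 0 := by positivity
  have h3 : ((m:ℝ)+1) ≠ 0 := by positivity
  rw [show (m:ℝ)+(n:ℝ)+2 = (n:ℝ)+(m:ℝ)+2 from by ring]
  field_simp
  ring

lemma rowX (m : ℕ) : ∑' n:ℕ, fX (m,n)
    = (1/((m:ℝ)+1)^2) * (H (m+1) 1/((m:ℝ)+1) - (Z 2 - H (m+1) 2)) := by
  rw [tsum_congr (fun n => fX_split m n), tsum_mul_left,
    Summable.tsum_sub (tail_summable m) (tail2_summable m), tail_tsum m, tail2 m]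

lemma rowX_summable (m : ℕ) : Summable (fun n => fX (m,n)) := by
  apply ((tail_summable m).sub (tail2_summable m)).mul_left ((1:ℝ)/((m:ℝ)+1)^2) |>.congr
  intro n
  rw [← fX_split m n]

lemma summable_fX : Summable fX := by
  apply (summable_prod_of_nonneg fX_nonneg).mpr
  refine ⟨rowX_summable, ?_⟩
  apply Summable.of_nonneg_of_le (fun m => tsum_nonneg (fun n => fX_nonneg _)) _ S_A3
  intro m
  rw [rowX m]
  have h1 : (0:ℝ) < ((m:ℝ)+1) := by positivity
  have h2 := tail2_nonneg m
  have h3 := H_nonneg (m+1) 1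
  have key : (1/((m:ℝ)+1)^2) * (H (m+1) 1/((m:ℝ)+1) - (Z 2 - H (m+1) 2))
      ≤ (1/((m:ℝ)+1)^2) * (H (m+1) 1/((m:ℝ)+1)) := by
    apply mul_le_mul_of_nonneg_left _ (by positivity)
    linarith
  calc (1/((m:ℝ)+1)^2) * (H (m+1) 1/((m:ℝ)+1) - (Z 2 - H (m+1) 2))
      ≤ (1/((m:ℝ)+1)^2) * (H (m+1) 1/((m:ℝ)+1)) := key
    _ = H (m+1) 1/((m:ℝ)+1)^3 := by
        rw [div_mul_div_comm, one_mul]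
        congr 1

lemma XX1 : ∑' p : ℕ×ℕ, fX p = EA3 - Z 2 * Z 2 + EP := by
  rw [Summable.tsum_prod' summable_fX rowX_summable, tsum_congr (fun m => rowX m)]
  have key : ∀ m:ℕ, (1/((m:ℝ)+1)^2) * (H (m+1) 1/((m:ℝ)+1) - (Z 2 - H (m+1) 2))
      = (H (m+1) 1/((m:ℝ)+1)^3 - Z 2 * (1/((m:ℝ)+1)^2)) + H (m+1) 2/((m:ℝ)+1)^2 := by
    intro m
    have h3 : ((m:ℝ)+1) ≠ 0 := by positivity
    field_simp
    ring
  rw [tsum_congr key,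
    Summable.tsum_add (S_A3.sub ((summable_pow_k (le_refl 2)).mul_left (Z 2))) S_P,
    Summable.tsum_sub S_A3 ((summable_pow_k (le_refl 2)).mul_left (Z 2)), tsum_mul_left]
  rw [show (∑' n:ℕ, H (n+1) 1/((n:ℝ)+1)^3) = EA3 from rfl,
    show (∑' n:ℕ, (1:ℝ)/((n:ℝ)+1)^2) = Z 2 from rfl,
    show (∑' n:ℕ, H (n+1) 2/((n:ℝ)+1)^2) = EP from rfl]

lemma innerX (s : ℕ) : ∑ i ∈ range (s+1), fX (i, s-i) = 2*H (s+1) 1/((s:ℝ)+2)^3 := by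
  have key : ∀ i ∈ range (s+1), fX (i, s-i)
      = (1/((s:ℝ)+2)^2) * (1/(((((s+1:ℕ)):ℝ)-(i:ℝ))*((i:ℝ)+1))) := by
    intro i hi
    rw [Finset.mem_range] at hi
    unfold fX
    simp only
    rw [Nat.cast_sub (Nat.lt_succ_iff.mp hi)]
    push_cast
    rw [show (i:ℝ) + ((s:ℝ)-(i:ℝ)) + 2 = (s:ℝ)+2 from by ring,
      one_div_mul_one_div]
    congr 1
    ring
  rw [Finset.sum_congr rfl key, ← Finset.mul_sum, F1 (s+1)]
  push_cast
  rw [show (s:ℝ)+1+1 = (s:ℝ)+2 from by ring]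
  rw [one_div_mul_eq_div, div_div, ← pow_succ']

lemma XX2 : ∑' p : ℕ×ℕ, fX p = 2*(EA3 - Z 4) := by
  rw [tsum_diag summable_fX, tsum_congr innerX]
  have key : ∀ s:ℕ, 2*H (s+1) 1/((s:ℝ)+2)^3
      = 2*(H (s+2) 1/((s:ℝ)+2)^3) - 2*(1/((s:ℝ)+2)^4) := by
    intro s
    rw [show H (s+2) 1 = H (s+1) 1 + 1/((s:ℝ)+2) by
      rw [H_succ (s+1) 1, pow_one]; push_cast; ring_nf]
    have h4 : ((s:ℝ)+2) ≠ 0 := by positivity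
    field_simp
    ring
  rw [tsum_congr key]
  have hg1 : Summable (fun s:ℕ => H (s+2) 1/((s:ℝ)+2)^3) :=
    summable_shift S_A3 _ (fun s => by push_cast; ring_nf)
  have hg2 : Summable (fun s:ℕ => (1:ℝ)/((s:ℝ)+2)^4) :=
    summable_shift (summable_pow_k (by norm_num : 2 ≤ 4)) _ (fun s => by push_cast; ring_nf)
  have e1 : ∑' s:ℕ, H (s+2) 1/((s:ℝ)+2)^3 = EA3 - 1 := by
    rw [tsum_shift S_A3 (fun s => H (s+2) 1/((s:ℝ)+2)^3) (fun s => by push_cast; ring_nf)]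
    show (∑' n:ℕ, H (n+1) 1/((n:ℝ)+1)^3) - H (0+1) 1/(((0:ℕ):ℝ)+1)^3 = EA3 - 1
    rw [show H (0+1) 1 = 1 from H_one,
      show (∑' n:ℕ, H (n+1) 1/((n:ℝ)+1)^3) = EA3 from rfl]
    norm_num
  have e2 : ∑' s:ℕ, (1:ℝ)/((s:ℝ)+2)^4 = Z 4 - 1 := by
    rw [tsum_shift (summable_pow_k (by norm_num : 2 ≤ 4)) (fun s => (1:ℝ)/((s:ℝ)+2)^4)
      (fun s => by push_cast; ring_nf)]
    rw [show (∑' n:ℕ, (1:ℝ)/((n:ℝ)+1)^4) = Z 4 from rfl]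
    norm_num
  rw [Summable.tsum_sub (hg1.mul_left 2) (hg2.mul_left 2), tsum_mul_left, tsum_mul_left, e1, e2]
  ring

lemma EA3_val : EA3 = 2*Z 4 - Z 2^2 + EP := by
  have h := XX1.symm.trans XX2
  nlinarith [h]

noncomputable def fG : ℕ×ℕ → ℝ :=
  fun p => (2*H (p.1+1) 1/((p.1:ℝ)+2)) * (1/(((p.2:ℝ)+1)*((p.2:ℝ)+(p.1:ℝ)+3)))

lemma fG_nonneg : ∀ p, 0 ≤ fG p := fun p => by
  unfold fG
  have := H_nonneg (p.1+1) 1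
  positivity

lemma rowG (t : ℕ) : ∑' i:ℕ, fG (t,i) = 2*H (t+1) 1*H (t+2) 1/((t:ℝ)+2)^2 := by
  unfold fG
  simp only
  rw [tsum_mul_left]
  have e : ∑' i:ℕ, 1/(((i:ℝ)+1)*((i:ℝ)+(t:ℝ)+3)) = H (t+2) 1/((t:ℝ)+2) := by
    have h := tail_tsum (t+1)
    push_cast at h
    calc ∑' i:ℕ, 1/(((i:ℝ)+1)*((i:ℝ)+(t:ℝ)+3))
        = ∑' i:ℕ, 1/(((i:ℝ)+1)*((i:ℝ)+((t:ℝ)+1)+2)) := tsum_congr (fun i => by ring_nf)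
      _ = H (t+1+1) 1/((t:ℝ)+1+1) := h
      _ = H (t+2) 1/((t:ℝ)+2) := by
          rw [show t+1+1 = t+2 from rfl, show (t:ℝ)+1+1 = (t:ℝ)+2 from by ring]
  rw [e, div_mul_div_comm, ← pow_two]

lemma rowG_summable (t : ℕ) : Summable (fun i => fG (t,i)) := by
  unfold fG
  simp only
  apply Summable.mul_left
  have := tail_summable (t+1)
  push_cast at this
  apply this.congr
  intro i
  ring_nf

lemma summable_fG : Summable fG := by
  apply (summable_prod_of_nonneg fG_nonneg).mpr
  refine ⟨rowG_summable, ?_⟩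
  apply S_G.congr
  intro t
  rw [rowG t]

lemma GG1 : ∑' p : ℕ×ℕ, fG p = 2*(EB - EA3) := by
  rw [Summable.tsum_prod' summable_fG rowG_summable, tsum_congr rowG]
  have key : ∀ t:ℕ, 2*H (t+1) 1*H (t+2) 1/((t:ℝ)+2)^2
      = 2*(H (t+2) 1^2/((t:ℝ)+2)^2) - 2*(H (t+2) 1/((t:ℝ)+2)^3) := by
    intro t
    rw [show H (t+1) 1 = H (t+2) 1 - 1/((t:ℝ)+2) by
      rw [show H (t+2) 1 = H ((t+1)+1) 1 from rfl, H_succ (t+1) 1, pow_one]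
      push_cast; ring_nf]
    have h4 : ((t:ℝ)+2) ≠ 0 := by positivity
    field_simp
  rw [tsum_congr key]
  have hg1 : Summable (fun s:ℕ => H (s+2) 1^2/((s:ℝ)+2)^2) :=
    summable_shift S_B _ (fun s => by push_cast; ring_nf)
  have hg2 : Summable (fun s:ℕ => H (s+2) 1/((s:ℝ)+2)^3) :=
    summable_shift S_A3 _ (fun s => by push_cast; ring_nf)
  have e1 : ∑' s:ℕ, H (s+2) 1^2/((s:ℝ)+2)^2 = EB - 1 := by
    rw [tsum_shift S_B (fun s => H (s+2) 1^2/((s:ℝ)+2)^2) (fun s => by push_cast; ring_nf)]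
    show (∑' n:ℕ, H (n+1) 1^2/((n:ℝ)+1)^2) - H (0+1) 1^2/(((0:ℕ):ℝ)+1)^2 = EB - 1
    rw [show H (0+1) 1 = 1 from H_one,
      show (∑' n:ℕ, H (n+1) 1^2/((n:ℝ)+1)^2) = EB from rfl]
    norm_num
  have e2 : ∑' s:ℕ, H (s+2) 1/((s:ℝ)+2)^3 = EA3 - 1 := by
    rw [tsum_shift S_A3 (fun s => H (s+2) 1/((s:ℝ)+2)^3) (fun s => by push_cast; ring_nf)]
    show (∑' n:ℕ, H (n+1) 1/((n:ℝ)+1)^3) - H (0+1) 1/(((0:ℕ):ℝ)+1)^3 = EA3 - 1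
    rw [show H (0+1) 1 = 1 from H_one,
      show (∑' n:ℕ, H (n+1) 1/((n:ℝ)+1)^3) = EA3 from rfl]
    norm_num
  rw [Summable.tsum_sub (hg1.mul_left 2) (hg2.mul_left 2), tsum_mul_left, tsum_mul_left, e1, e2]
  ring

lemma innerG (s : ℕ) : ∑ i ∈ range (s+1), fG (i, s-i)
    = 3*(H (s+2) 1^2 - H (s+2) 2)/((s:ℝ)+3)^2 := by
  have key : ∀ i ∈ range (s+1), fG (i, s-i)
      = (1/((s:ℝ)+3)) * (2 * H (i+1) 1 / (((i:ℝ)+2)*((s:ℝ)-(i:ℝ)+1))) := by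
    intro i hi
    rw [Finset.mem_range] at hi
    unfold fG
    simp only
    rw [Nat.cast_sub (Nat.lt_succ_iff.mp hi)]
    rw [show ((s:ℝ)-(i:ℝ)) + (i:ℝ) + 3 = (s:ℝ)+3 from by ring]
    have h1 : (i:ℝ) ≤ (s:ℝ) := by exact_mod_cast Nat.lt_succ_iff.mp hi
    have h2 : (0:ℝ) < (s:ℝ)-(i:ℝ)+1 := by linarith
    have h3 : (0:ℝ) < (i:ℝ)+2 := by positivity
    have h4 : (0:ℝ) < (s:ℝ)+3 := by positivity
    field_simp
  rw [Finset.sum_congr rfl key, ← Finset.mul_sum, F4 s]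
  rw [one_div_mul_eq_div, div_div, ← pow_two]

lemma GG2 : ∑' p : ℕ×ℕ, fG p = 3*(EW - EV) := by
  rw [tsum_diag summable_fG, tsum_congr innerG]
  have key : ∀ s:ℕ, 3*(H (s+2) 1^2 - H (s+2) 2)/((s:ℝ)+3)^2
      = 3*(H (s+2) 1^2/((s:ℝ)+3)^2) - 3*(H (s+2) 2/((s:ℝ)+3)^2) := by
    intro s
    field_simp
  have hg1 : Summable (fun s:ℕ => H (s+2) 1^2/((s:ℝ)+3)^2) := by
    apply summable_shift (summable_shift S_W
      (fun n => H (n+1) 1^2/((n:ℝ)+2)^2) (fun n => by push_cast; ring_nf))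
      _ (fun s => by push_cast; ring_nf)
  have hg2 : Summable (fun s:ℕ => H (s+2) 2/((s:ℝ)+3)^2) := by
    apply summable_shift (summable_shift S_V
      (fun n => H (n+1) 2/((n:ℝ)+2)^2) (fun n => by push_cast; ring_nf))
      _ (fun s => by push_cast; ring_nf)
  have e1 : ∑' s:ℕ, H (s+2) 1^2/((s:ℝ)+3)^2 = EW - 1/4 := by
    rw [tsum_shift (summable_shift S_W
      (fun n => H (n+1) 1^2/((n:ℝ)+2)^2) (fun n => by push_cast; ring_nf))
      (fun s => H (s+2) 1^2/((s:ℝ)+3)^2) (fun s => by push_cast; ring_nf)]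
    rw [tsum_shift S_W (fun n => H (n+1) 1^2/((n:ℝ)+2)^2) (fun n => by push_cast; ring_nf)]
    show ((∑' n:ℕ, H n 1^2/((n:ℝ)+1)^2) - H 0 1^2/(((0:ℕ):ℝ)+1)^2)
      - H (0+1) 1^2/(((0:ℕ):ℝ)+2)^2 = EW - 1/4
    rw [H_zero, show H (0+1) 1 = 1 from H_one,
      show (∑' n:ℕ, H n 1^2/((n:ℝ)+1)^2) = EW from rfl]
    norm_num
  have e2 : ∑' s:ℕ, H (s+2) 2/((s:ℝ)+3)^2 = EV - 1/4 := by
    rw [tsum_shift (summable_shift S_V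
      (fun n => H (n+1) 2/((n:ℝ)+2)^2) (fun n => by push_cast; ring_nf))
      (fun s => H (s+2) 2/((s:ℝ)+3)^2) (fun s => by push_cast; ring_nf)]
    rw [tsum_shift S_V (fun n => H (n+1) 2/((n:ℝ)+2)^2) (fun n => by push_cast; ring_nf)]
    show ((∑' n:ℕ, H n 2/((n:ℝ)+1)^2) - H 0 2/(((0:ℕ):ℝ)+1)^2)
      - H (0+1) 2/(((0:ℕ):ℝ)+2)^2 = EV - 1/4
    rw [H_zero, show H (0+1) 2 = 1 from by rw [H_succ 0 2, H_zero]; norm_num,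
      show (∑' n:ℕ, H n 2/((n:ℝ)+1)^2) = EV from rfl]
    norm_num
  rw [tsum_congr key, Summable.tsum_sub (hg1.mul_left 3) (hg2.mul_left 3),
    tsum_mul_left, tsum_mul_left, e1, e2]
  ring

lemma EB_rel : EB = EW + 2*EA3 - Z 4 := by
  have key : ∀ n:ℕ, H (n+1) 1^2/((n:ℝ)+1)^2
      = (H n 1^2/((n:ℝ)+1)^2 + 2*(H (n+1) 1/((n:ℝ)+1)^3)) - 1/((n:ℝ)+1)^4 := by
    intro n
    rw [H_succ n 1, pow_one]
    have h : ((n:ℝ)+1) ≠ 0 := by positivity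
    field_simp
    ring
  rw [show EB = ∑' n:ℕ, H (n+1) 1^2/((n:ℝ)+1)^2 from rfl, tsum_congr key,
    Summable.tsum_sub (S_W.add (S_A3.mul_left 2)) (summable_pow_k (by norm_num : 2 ≤ 4)),
    Summable.tsum_add S_W (S_A3.mul_left 2), tsum_mul_left]
  rw [show (∑' n:ℕ, H n 1^2/((n:ℝ)+1)^2) = EW from rfl,
    show (∑' n:ℕ, H (n+1) 1/((n:ℝ)+1)^3) = EA3 from rfl,
    show (∑' n:ℕ, (1:ℝ)/((n:ℝ)+1)^4) = Z 4 from rfl]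

lemma EB_eq : EB = 4*EA3 - 3*Z 4 + 3*EV := by
  have h1 := GG1.symm.trans GG2
  have h2 := EB_rel
  linarith

lemma AbelId (N : ℕ) : ∑ n ∈ range N, H (n+1) 1^2 * (1/((n:ℝ)+1) - 1/((n:ℝ)+2))
    = (∑ k ∈ range N, (2*H (k+1) 1/((k:ℝ)+1)^2 - 1/((k:ℝ)+1)^3)) - H N 1^2/((N:ℝ)+1) := by
  induction N with
  | zero => simp [H_zero]
  | succ N ih =>
    rw [Finset.sum_range_succ, Finset.sum_range_succ, ih, H_succ N 1, pow_one]
    have h1 : ((N:ℝ)+1) ≠ 0 := by positivity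
    have h2 : ((N:ℝ)+2) ≠ 0 := by positivity
    have hc : ((N+1:ℕ):ℝ) = (N:ℝ)+1 := by push_cast; ring
    rw [hc]
    field_simp
    ring

lemma S_T2 : Summable (fun n:ℕ => H (n+1) 1^2 * (1/((n:ℝ)+1) - 1/((n:ℝ)+2))) := by
  apply Summable.of_nonneg_of_le _ _ S_B
  · intro n
    have h : 1/((n:ℝ)+2) ≤ 1/((n:ℝ)+1) := by
      apply one_div_le_one_div_of_le (by positivity) (by linarith)
    have := H_nonneg (n+1) 1
    nlinarith
  · intro n
    have key : 1/((n:ℝ)+1) - 1/((n:ℝ)+2) ≤ 1/((n:ℝ)+1)^2 := by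
      rw [div_sub_div _ _ (by positivity : ((n:ℝ)+1) ≠ 0) (by positivity : ((n:ℝ)+2) ≠ 0)]
      rw [div_le_div_iff₀ (by positivity) (by positivity)]
      nlinarith [Nat.cast_nonneg (α := ℝ) n]
    have h2 : (0:ℝ) ≤ H (n+1) 1^2 := sq_nonneg _
    calc H (n+1) 1^2 * (1/((n:ℝ)+1) - 1/((n:ℝ)+2))
        ≤ H (n+1) 1^2 * (1/((n:ℝ)+1)^2) := mul_le_mul_of_nonneg_left key h2
      _ = H (n+1) 1^2/((n:ℝ)+1)^2 := by rw [mul_one_div]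

lemma lim0 : Tendsto (fun N:ℕ => H N 1^2/((N:ℝ)+1)) atTop (𝓝 0) := by
  apply squeeze_zero
  · intro N
    have := H_nonneg N 1
    positivity
  · intro N
    show H N 1^2/((N:ℝ)+1) ≤ 9 * (1/((N:ℝ)+1)^((1:ℝ)/3))
    have hx : (0:ℝ) < (N:ℝ)+1 := by positivity
    have hN : (0:ℝ) ≤ (N:ℝ) := Nat.cast_nonneg N
    have h1 : H N 1^2 ≤ 9*((N:ℝ)+1)^((2:ℝ)/3) := by
      have h := H_le_cbrt N
      have h2 : H N 1^2 ≤ (3*(N:ℝ)^((1:ℝ)/3))^2 := pow_le_pow_left₀ (H_nonneg N 1) h 2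
      have h3 : ((N:ℝ)^((1:ℝ)/3))^(2:ℕ) = (N:ℝ)^((2:ℝ)/3) := by
        rw [← Real.rpow_natCast ((N:ℝ)^((1:ℝ)/3)) 2, ← Real.rpow_mul hN]
        norm_num
      have h4 : (N:ℝ)^((2:ℝ)/3) ≤ ((N:ℝ)+1)^((2:ℝ)/3) :=
        Real.rpow_le_rpow hN (by linarith) (by norm_num)
      nlinarith
    calc H N 1^2/((N:ℝ)+1) ≤ (9*((N:ℝ)+1)^((2:ℝ)/3))/((N:ℝ)+1) := by
          apply div_le_div_of_nonneg_right h1 (le_of_lt hx)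
      _ = 9 * (((N:ℝ)+1)^((2:ℝ)/3)/((N:ℝ)+1)^(1:ℕ)) := by rw [pow_one]; ring
      _ = 9 * ((N:ℝ)+1)^((2:ℝ)/3 - (1:ℕ)) := by
          rw [← Real.rpow_natCast ((N:ℝ)+1) 1, ← Real.rpow_sub hx]
      _ = 9 * (1/((N:ℝ)+1)^((1:ℝ)/3)) := by
          rw [show (2:ℝ)/3 - ((1:ℕ):ℝ) = -(1/3) by push_cast; norm_num,
            Real.rpow_neg (le_of_lt hx), inv_eq_one_div]
  · have hb : Tendsto (fun N:ℕ => ((N:ℝ)+1)) atTop atTop :=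
      tendsto_atTop_add_const_right atTop 1 tendsto_natCast_atTop_atTop
    have hr : Tendsto (fun x:ℝ => x^(-(1/3):ℝ)) atTop (𝓝 0) :=
      tendsto_rpow_neg_atTop (by norm_num)
    have := hr.comp hb
    have h9 := this.const_mul (9:ℝ)
    rw [mul_zero] at h9
    apply h9.congr
    intro N
    show 9 * ((N:ℝ)+1)^(-(1/3):ℝ) = 9 * (1/((N:ℝ)+1)^((1:ℝ)/3))
    rw [Real.rpow_neg (by positivity), inv_eq_one_div]

lemma T2_val : ∑' n:ℕ, H (n+1) 1^2 * (1/((n:ℝ)+1) - 1/((n:ℝ)+2)) = 2*EA - Z 3 := by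
  have h1 : Summable (fun k:ℕ => 2*H (k+1) 1/((k:ℝ)+1)^2 - 1/((k:ℝ)+1)^3) := by
    apply Summable.sub _ (summable_pow_k (by norm_num : 2 ≤ 3))
    have := S_A.mul_left 2
    apply this.congr
    intro k
    ring
  have h2 : ∑' k:ℕ, (2*H (k+1) 1/((k:ℝ)+1)^2 - 1/((k:ℝ)+1)^3) = 2*EA - Z 3 := by
    rw [Summable.tsum_sub _ (summable_pow_k (by norm_num : 2 ≤ 3))]
    · have e : ∑' k:ℕ, 2*H (k+1) 1/((k:ℝ)+1)^2 = 2*EA := by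
        have : ∀ k:ℕ, 2*H (k+1) 1/((k:ℝ)+1)^2 = 2*(H (k+1) 1/((k:ℝ)+1)^2) := by
          intro k; ring
        rw [tsum_congr this, tsum_mul_left]
        rw [show (∑' n:ℕ, H (n+1) 1/((n:ℝ)+1)^2) = EA from rfl]
      rw [e, show (∑' n:ℕ, (1:ℝ)/((n:ℝ)+1)^3) = Z 3 from rfl]
    · have := S_A.mul_left 2
      apply this.congr
      intro k
      ring
  have htend2 : Tendsto (fun N => ∑ n ∈ range N, H (n+1) 1^2 * (1/((n:ℝ)+1) - 1/((n:ℝ)+2)))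
      atTop (𝓝 (2*EA - Z 3)) := by
    have ha := h1.hasSum.tendsto_sum_nat
    rw [h2] at ha
    have := ha.sub lim0
    rw [sub_zero] at this
    apply this.congr
    intro N
    rw [AbelId N]
  exact tendsto_nhds_unique S_T2.hasSum.tendsto_sum_nat htend2

theorem stmt10 :
    ∑' n : ℕ, H (n + 1) 1 ^ 2 / (((n : ℝ) + 1) ^ 2 * ((n : ℝ) + 2)) =
      (17 / 4) * Z 4 - 3 * Z 3 := by
  have key : ∀ n:ℕ, H (n + 1) 1 ^ 2 / (((n : ℝ) + 1) ^ 2 * ((n : ℝ) + 2))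
      = H (n+1) 1^2/((n:ℝ)+1)^2 - H (n+1) 1^2 * (1/((n:ℝ)+1) - 1/((n:ℝ)+2)) := by
    intro n
    have h1 : ((n:ℝ)+1) ≠ 0 := by positivity
    have h2 : ((n:ℝ)+2) ≠ 0 := by positivity
    field_simp
    ring
  rw [tsum_congr key, Summable.tsum_sub S_B S_T2, T2_val,
    show (∑' n:ℕ, H (n+1) 1^2/((n:ℝ)+1)^2) = EB from rfl]
  have hZ : Z 2^2 = 5/2 * Z 4 := by
    rw [Z2_val, Z4_val]
    ring
  have hEV := EV_val
  have hEP := EP_val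
  have hEA := EA_val
  have hEA3 := EA3_val
  have hEB := EB_eq
  have hEBval : EB = 17/4 * Z 4 := by
    rw [hEB, hEA3, hEP, hEV]
    linarith [hZ]
  rw [hEBval, hEA]
  ring
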